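/- arXiv:1404.5449 — 6 statements merged into one kernel-verified Lean document; each statement's English description precedes it below -/
import Mathlib

section
/- Let 0 < s < b, let x = (b cos θ, b sin θ) and y = (s cos θ_y, s sin θ_y) be points of ℝ². Then the series Σ_{m=1}^∞ (1/m)(s/b)^m cos m(θ − θ_y) converges and log|x − y| = log b − Σ_{m=1}^∞ (1/m)(s/b)^m cos m(θ − θ_y). -/
/-!
With `r = s / b < 1` and `φ = θ - θy`, the law of cosines gives
`‖x - y‖ = b |1 - r e^{iφ}|`, and the real part of the Taylor series
`-log (1 - z) = ∑ zᵐ / m` at `z = r e^{iφ}` is `-log |1 - z| = ∑ rᵐ cos (m φ) / m`.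
-/

open Complex

theorem Complex.hasSum_re_pow_succ_div_succ {z : ℂ} (hz : ‖z‖ < 1) :
    HasSum (fun n : ℕ => (z ^ (n + 1) / (n + 1)).re) (-Real.log ‖1 - z‖) := by
  have hlog : HasSum (fun n : ℕ => z ^ (n + 1) / (n + 1)) (-log (1 - z)) := by
    simpa using (hasSum_nat_add_iff' 1).2 (hasSum_taylorSeries_neg_log hz)
  simpa [log_re] using hlog.mapL reCLM

theorem Complex.re_ofReal_mul_exp_pow_succ_div_succ (r φ : ℝ) (n : ℕ) :
    ((r * exp (φ * I)) ^ (n + 1) / (n + 1)).re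
      = 1 / (n + 1 : ℝ) * r ^ (n + 1) * Real.cos ((n + 1) * φ) := by
  have hpow : (r * exp (φ * I)) ^ (n + 1)
      = ((r ^ (n + 1) : ℝ) : ℂ) * exp (((n + 1 : ℝ) * φ : ℝ) * I) := by
    rw [mul_pow, ← exp_nat_mul]
    push_cast
    ring_nf
  rw [hpow, div_eq_inv_mul, show ((n : ℂ) + 1)⁻¹ = (((n + 1 : ℝ))⁻¹ : ℝ) by push_cast; rfl,
    ← mul_assoc, ← ofReal_mul, re_ofReal_mul, exp_ofReal_mul_I_re]
  ring

theorem Complex.sq_norm_one_sub_ofReal_mul_exp (r φ : ℝ) :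
    ‖1 - r * exp (φ * I)‖ ^ 2 = 1 - 2 * r * Real.cos φ + r ^ 2 := by
  rw [Complex.sq_norm, exp_mul_I, normSq_apply]
  simp only [sub_re, sub_im, one_re, one_im, mul_re, mul_im, add_re, add_im, ofReal_re,
    ofReal_im, cos_ofReal_re, cos_ofReal_im, sin_ofReal_re, sin_ofReal_im, I_re, I_im]
  linear_combination r ^ 2 * Real.sin_sq_add_cos_sq φ

theorem Real.hasSum_pow_mul_cos_div {r : ℝ} (hr : |r| < 1) (φ : ℝ) :
    HasSum (fun n : ℕ => 1 / (n + 1 : ℝ) * r ^ (n + 1) * Real.cos ((n + 1) * φ))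
      (-Real.log (1 - 2 * r * Real.cos φ + r ^ 2) / 2) := by
  have hz : ‖(r : ℂ) * Complex.exp (φ * I)‖ < 1 := by
    simpa only [norm_mul, norm_real, Real.norm_eq_abs, Complex.norm_exp_ofReal_mul_I, mul_one] using hr
  have hsum := Complex.hasSum_re_pow_succ_div_succ hz
  simp only [Complex.re_ofReal_mul_exp_pow_succ_div_succ] at hsum
  rwa [← Complex.sq_norm_one_sub_ofReal_mul_exp, Real.log_pow, Nat.cast_ofNat,
    neg_div, mul_div_cancel_left₀ _ two_ne_zero]

theorem EuclideanSpace.sq_norm_sub_of_polar {x y : EuclideanSpace ℝ (Fin 2)} {a c α β : ℝ}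
    (hx : x.ofLp = ![a * Real.cos α, a * Real.sin α])
    (hy : y.ofLp = ![c * Real.cos β, c * Real.sin β]) :
    ‖x - y‖ ^ 2 = a ^ 2 + c ^ 2 - 2 * a * c * Real.cos (α - β) := by
  rw [EuclideanSpace.norm_eq, Real.sq_sqrt (by positivity), Fin.sum_univ_two]
  simp only [WithLp.ofLp_sub, Pi.sub_apply, hx, hy, Matrix.cons_val_zero, Matrix.cons_val_one,
    Real.norm_eq_abs, sq_abs, Real.cos_sub]
  linear_combination a ^ 2 * Real.sin_sq_add_cos_sq α + c ^ 2 * Real.sin_sq_add_cos_sq β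

/-- Let `0 < s < b`, `x = (b cos θ, b sin θ)`, `y = (s cos θ_y, s sin θ_y)` in `ℝ²`.
Then `Σ_{m=1}^∞ (1/m)(s/b)^m cos m(θ - θ_y)` converges and
`log ‖x - y‖ = log b - Σ_{m=1}^∞ (1/m)(s/b)^m cos m(θ - θ_y)`. -/
theorem log_dist_expansion_outer_circle (b s θ θy : ℝ) (hs : 0 < s) (hsb : s < b)
    (x y : EuclideanSpace ℝ (Fin 2))
    (hx : x = ![b * Real.cos θ, b * Real.sin θ])
    (hy : y = ![s * Real.cos θy, s * Real.sin θy]) :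
    HasSum (fun m : ℕ => (1 / (m + 1 : ℝ)) * (s / b) ^ (m + 1) * Real.cos ((m + 1) * (θ - θy)))
      (Real.log b - Real.log ‖x - y‖) := by
  have hb : 0 < b := hs.trans hsb
  set r := s / b with hr
  set φ := θ - θy
  have hr0 : 0 < r := div_pos hs hb
  have hr1 : r < 1 := (div_lt_one hb).2 hsb
  have hQ : 0 < 1 - 2 * r * Real.cos φ + r ^ 2 := by
    nlinarith [Real.cos_le_one φ]
  have hdist : ‖x - y‖ ^ 2 = b ^ 2 * (1 - 2 * r * Real.cos φ + r ^ 2) := by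
    rw [EuclideanSpace.sq_norm_sub_of_polar hx hy, hr]
    field_simp
    ring
  have hlog : Real.log ‖x - y‖ = Real.log b + Real.log (1 - 2 * r * Real.cos φ + r ^ 2) / 2 := by
    have := congrArg Real.log hdist
    rw [Real.log_pow, Real.log_mul (by positivity) hQ.ne', Real.log_pow] at this
    push_cast at this
    linarith
  convert Real.hasSum_pow_mul_cos_div (by rwa [abs_of_pos hr0]) φ using 1
  rw [hlog]
  ring
end

section
/- Let 0 < a < s, let x = (a cos θ, a sin θ) and y = (s cos θ_y, s sin θ_y) be points of ℝ². Then the series Σ_{m=1}^∞ (1/m)(a/s)^m cos m(θ − θ_y) converges and log|x − y| = log s − Σ_{m=1}^∞ (1/m)(a/s)^m cos m(θ − θ_y). -/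
/-!
Identify the plane with `ℂ`: then `x - y = a e^{iθ} - s e^{iθy} = -s e^{iθy} (1 - z)` with
`z = (a / s) e^{i(θ - θy)}` in the open unit disc, so `log ‖x - y‖ = log s + Re log (1 - z)`.
The real part of the Mercator series `-log (1 - z) = ∑ z^m / m` is the cosine series.
-/

open Complex

theorem Complex.hasSum_re_pow_succ_div_eq_neg_log_norm {z : ℂ} (hz : ‖z‖ < 1) :
    HasSum (fun n : ℕ => (z ^ (n + 1) / (n + 1 : ℕ)).re) (-Real.log ‖1 - z‖) := by
  have h := reCLM.hasSum (hasSum_taylorSeries_neg_log hz)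
  rw [← log_re, ← neg_re]
  exact (hasSum_nat_add_iff (f := fun n : ℕ => (z ^ n / n).re) 1).mpr (by simpa using h)

theorem hasSum_pow_mul_cos_div_eq_neg_log_norm {r : ℝ} (hr : |r| < 1) (φ : ℝ) :
    HasSum (fun n : ℕ => (1 / (n + 1 : ℝ)) * r ^ (n + 1) * Real.cos ((n + 1) * φ))
      (-Real.log ‖1 - r * exp (φ * I)‖) := by
  have hz : ‖(r : ℂ) * exp (φ * I)‖ < 1 := by simpa [norm_exp_ofReal_mul_I] using hr
  convert Complex.hasSum_re_pow_succ_div_eq_neg_log_norm hz using 2 with n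
  rw [mul_pow, ← exp_nat_mul, ← ofReal_pow, ← mul_assoc, ← ofReal_natCast, ← ofReal_mul,
    mul_div_right_comm, ← ofReal_div, re_ofReal_mul, exp_ofReal_mul_I_re]
  push_cast
  ring

theorem Complex.orthonormalBasisOneI_repr_mul_exp (r θ : ℝ) :
    (orthonormalBasisOneI.repr (r * exp (θ * I))).ofLp = ![r * Real.cos θ, r * Real.sin θ] := by
  rw [orthonormalBasisOneI_repr_apply, re_ofReal_mul, im_ofReal_mul, exp_ofReal_mul_I_re,
    exp_ofReal_mul_I_im]

theorem Complex.norm_mul_exp_sub_mul_exp (a θ θy : ℝ) {s : ℝ} (hs : 0 < s) :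
    ‖a * exp (θ * I) - s * exp (θy * I)‖ = s * ‖1 - (a / s : ℝ) * exp ((θ - θy : ℝ) * I)‖ := by
  have hsC : (s : ℂ) ≠ 0 := ofReal_ne_zero.mpr hs.ne'
  have hfactor : (a : ℂ) * exp (θ * I) - s * exp (θy * I)
      = -(s * exp (θy * I)) * (1 - (a / s : ℝ) * exp ((θ - θy : ℝ) * I)) := by
    push_cast
    rw [sub_mul, exp_sub]
    field_simp
    ring
  rw [hfactor, norm_mul, norm_neg, norm_mul, norm_exp_ofReal_mul_I, norm_real,
    Real.norm_of_nonneg hs.le, mul_one]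

/-- Let `0 < a < s`, `x = (a cos θ, a sin θ)`, `y = (s cos θ_y, s sin θ_y)` in `ℝ²`.
Then `Σ_{m=1}^∞ (1/m)(a/s)^m cos m(θ - θ_y)` converges and
`log ‖x - y‖ = log s - Σ_{m=1}^∞ (1/m)(a/s)^m cos m(θ - θ_y)`. -/
theorem log_dist_expansion_inner_circle (a s θ θy : ℝ) (ha : 0 < a) (has : a < s)
    (x y : EuclideanSpace ℝ (Fin 2))
    (hx : x = ![a * Real.cos θ, a * Real.sin θ])
    (hy : y = ![s * Real.cos θy, s * Real.sin θy]) :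
    HasSum (fun m : ℕ => (1 / (m + 1 : ℝ)) * (a / s) ^ (m + 1) * Real.cos ((m + 1) * (θ - θy)))
      (Real.log s - Real.log ‖x - y‖) := by
  have hs : 0 < s := ha.trans has
  have hr : |a / s| < 1 := by rw [abs_of_pos (div_pos ha hs), div_lt_one hs]; exact has
  have hx' : x = orthonormalBasisOneI.repr (a * exp (θ * I)) :=
    WithLp.ofLp_injective 2 (by rw [hx, orthonormalBasisOneI_repr_mul_exp])
  have hy' : y = orthonormalBasisOneI.repr (s * exp (θy * I)) :=
    WithLp.ofLp_injective 2 (by rw [hy, orthonormalBasisOneI_repr_mul_exp])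
  have hne : ‖1 - (a / s : ℝ) * exp ((θ - θy : ℝ) * I)‖ ≠ 0 := by
    have := norm_sub_norm_le (1 : ℂ) ((a / s : ℝ) * exp ((θ - θy : ℝ) * I))
    rw [norm_one, norm_mul, norm_exp_ofReal_mul_I, norm_real, Real.norm_eq_abs, mul_one] at this
    linarith
  rw [hx', hy', ← map_sub, LinearIsometryEquiv.norm_map, norm_mul_exp_sub_mul_exp a θ θy hs,
    Real.log_mul hs.ne' hne, sub_add_cancel_left]
  exact hasSum_pow_mul_cos_div_eq_neg_log_norm hr (θ - θy)
end

section
/- Fix y ∈ A. The function u : A → ℝ defined by u(x) = A_0(y) + B_0(y) log|x| − Σ_{m=1}^∞ (1/m)(A_m(y)|x|^m + B_m(y)|x|^{−m}) cos m(θ − θ_y), where x = (|x| cos θ, |x| sin θ), is twice continuously differentiable on A and harmonic there, i.e. ∂²u/∂x₁² + ∂²u/∂x₂² = 0 at every point of A. Equivalently, x ↦ G_A(x,y) + log|x − y| extends to a harmonic function on all of A. -/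
/-- The coefficient `A_0(y)` of the Green function of the annulus `{a < |x| < b}`,
as a function of `s = |y|`. -/
noncomputable def A0 (a b s : ℝ) : ℝ := Real.log b * (Real.log (a / s) / Real.log (a / b))

/-- The coefficient `B_0(y)`, as a function of `s = |y|`. -/
noncomputable def B0 (a b s : ℝ) : ℝ := Real.log (s / b) / Real.log (a / b)

/-- The Fourier coefficient `A_m(y)`, as a function of `s = |y|`. -/
noncomputable def Acoef (a b s : ℝ) (m : ℕ) : ℝ :=
  (s ^ m - (a ^ 2 / s) ^ m) / (b ^ (2 * m) - a ^ (2 * m))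

/-- The Fourier coefficient `B_m(y)`, as a function of `s = |y|`. -/
noncomputable def Bcoef (a b s : ℝ) (m : ℕ) : ℝ :=
  a ^ (2 * m) * ((b ^ 2 / s) ^ m - s ^ m) / (b ^ (2 * m) - a ^ (2 * m))

/-- The point `p = (p₁, p₂) ∈ ℝ²` viewed as the complex number `p₁ + i p₂`. -/
noncomputable def zOf (p : ℝ × ℝ) : ℂ := (p.1 : ℂ) + p.2 * Complex.I

/-- The regular part `u(x) = A_0(y) + B_0(y) log|x| - Σ_{m≥1} (1/m)(A_m(y)|x|^m +
B_m(y)|x|^{-m}) cos m(θ - θ_y)` of the Green function `G_A(·, y)`, written intrinsically: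
for `x = (rcos θ, rsin θ)` (i.e. `z = r e^{iθ}`) one has
`|x|^m cos m(θ - α) = Re (z^m e^{-imα})` and `|x|^{-m} cos m(θ - α) = Re (z^{-m} e^{imα})`.
Here `y = (s cos α, s sin α)`. -/
noncomputable def uReg (a b s α : ℝ) (p : ℝ × ℝ) : ℝ :=
  A0 a b s + B0 a b s * Real.log (‖zOf p‖)
  - ∑' m : ℕ, (1 / (m + 1 : ℝ)) *
      (Acoef a b s (m + 1) *
        ((zOf p) ^ (m + 1) * Complex.exp (-((m + 1 : ℝ) * α) * Complex.I)).re
      + Bcoef a b s (m + 1) *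
        ((zOf p) ^ (-(m + 1 : ℤ)) * Complex.exp (((m + 1 : ℝ) * α) * Complex.I)).re)

/-!
On the annulus the series in `uReg` is the real part of the Laurent series `∑ greenTerm`, whose
`m`-th term is bounded by `((s/b)^m + (a/s)^m) / (1 - (a/b)^2)` uniformly on the annulus because
`a < s < b`; so it converges locally uniformly to a holomorphic function. Hence `uReg` is, through
`zOf`, the function `A₀ + B₀ log ‖z‖ - Re (holomorphic)`, which is harmonic on the annulus. The
sum of the two coordinate second derivatives is its Laplacian, computed along the directions `1`
and `I`.
-/

open Complex Topology Filter InnerProductSpace Laplacian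

lemma contDiff_zOf {n : WithTop ℕ∞} : ContDiff ℝ n zOf :=
  (ofRealCLM.contDiff.comp contDiff_fst).add
    ((ofRealCLM.contDiff.comp contDiff_snd).mul contDiff_const)

section SecondDerivatives

variable {E F : Type*} [NormedAddCommGroup E] [NormedSpace ℝ E] [NormedAddCommGroup F]
  [NormedSpace ℝ F]

theorem deriv_deriv_comp_line {f : E → F} {c v : E} {t : ℝ}
    (hf : ContDiffAt ℝ 2 f (c + t • v)) :
    deriv (deriv fun τ : ℝ => f (c + τ • v)) t =
      iteratedFDeriv ℝ 2 f (c + t • v) ![v, v] := by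
  have hline : ∀ τ : ℝ, HasDerivAt (fun τ : ℝ => c + τ • v) v τ := fun τ => by
    simpa using ((hasDerivAt_id τ).smul_const v).const_add c
  have hnear : ∀ᶠ τ in 𝓝 t, ContDiffAt ℝ 2 f (c + τ • v) :=
    (hline t).continuousAt.eventually (hf.eventually (by simp))
  have hfirst : deriv (fun τ : ℝ => f (c + τ • v)) =ᶠ[𝓝 t]
      fun τ => fderiv ℝ f (c + τ • v) v :=
    hnear.mono fun τ hτ =>
      ((hτ.differentiableAt (by simp)).hasFDerivAt.comp_hasDerivAt τ (hline τ)).deriv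
  have hf' : DifferentiableAt ℝ (fderiv ℝ f) (c + t • v) :=
    (hf.fderiv_right (m := 1) le_rfl).differentiableAt one_ne_zero
  have hfderiv : HasDerivAt (fun τ : ℝ => fderiv ℝ f (c + τ • v))
      (fderiv ℝ (fderiv ℝ f) (c + t • v) v) t :=
    hf'.hasFDerivAt.comp_hasDerivAt (f := fun τ : ℝ => c + τ • v) t (hline t)
  have hsecond : HasDerivAt (fun τ => fderiv ℝ f (c + τ • v) v)
      (fderiv ℝ (fderiv ℝ f) (c + t • v) v v) t := by
    simpa using hfderiv.clm_apply (hasDerivAt_const t v)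
  rw [hfirst.deriv_eq, hsecond.deriv, iteratedFDeriv_two_apply]
  rfl

theorem InnerProductSpace.HarmonicAt.deriv_deriv_add_deriv_deriv {f : ℂ → F} {x y : ℝ}
    (hf : HarmonicAt f (x + y * I)) :
    deriv (deriv fun t : ℝ => f (t + y * I)) x +
      deriv (deriv fun t : ℝ => f (x + t * I)) y = 0 := by
  have horiz : (fun t : ℝ => f (t + y * I)) = fun t : ℝ => f (y * I + t • (1 : ℂ)) := by
    ext t; simp [add_comm]
  have vert : (fun t : ℝ => f (x + t * I)) = fun t : ℝ => f (x + t • I) := by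
    ext t; simp
  have hΔ : Δ f (x + y * I) = 0 := hf.2.eq_of_nhds
  rw [laplacian_eq_iteratedFDeriv_complexPlane] at hΔ
  rw [horiz, vert, deriv_deriv_comp_line, deriv_deriv_comp_line]
  · simpa [add_comm] using hΔ
  · simpa using hf.1
  · simpa [add_comm] using hf.1

theorem InnerProductSpace.HarmonicAt.deriv_deriv_add_deriv_deriv_of_eventuallyEq
    {u : ℝ × ℝ → F} {f : ℂ → F} {p : ℝ × ℝ}
    (hf : HarmonicAt f (zOf p)) (hu : u =ᶠ[𝓝 p] f ∘ zOf) :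
    deriv (fun t : ℝ => deriv (fun w : ℝ => u (w, p.2)) t) p.1 +
      deriv (fun t : ℝ => deriv (fun w : ℝ => u (p.1, w)) t) p.2 = 0 := by
  have horiz : (fun w : ℝ => u (w, p.2)) =ᶠ[𝓝 p.1] fun w : ℝ => f (w + p.2 * I) :=
    hu.comp_tendsto ((Continuous.prodMk_left p.2).tendsto p.1)
  have vert : (fun w : ℝ => u (p.1, w)) =ᶠ[𝓝 p.2] fun w : ℝ => f (p.1 + w * I) :=
    hu.comp_tendsto ((Continuous.prodMk_right p.1).tendsto p.2)
  rw [horiz.deriv.deriv_eq, vert.deriv.deriv_eq]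
  exact hf.deriv_deriv_add_deriv_deriv

end SecondDerivatives

section CoefficientBounds

variable {a b s r : ℝ} {n : ℕ}

lemma one_sub_div_sq_pos (ha : 0 ≤ a) (hab : a < b) : 0 < 1 - (a / b) ^ 2 := by
  have hb : 0 < b := ha.trans_lt hab
  have : (a / b) ^ 2 < 1 := pow_lt_one₀ (by positivity) ((div_lt_one hb).2 hab) two_ne_zero
  linarith

lemma pow_mul_one_sub_sq_le (ha : 0 ≤ a) (hab : a < b) (hn : n ≠ 0) :
    b ^ (2 * n) * (1 - (a / b) ^ 2) ≤ b ^ (2 * n) - a ^ (2 * n) := by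
  have hb : 0 < b := ha.trans_lt hab
  have hpow : (a / b) ^ (2 * n) ≤ (a / b) ^ 2 :=
    pow_le_pow_of_le_one (by positivity) ((div_le_one hb).2 hab.le) (by omega)
  have hsplit : a ^ (2 * n) = b ^ (2 * n) * (a / b) ^ (2 * n) := by
    rw [div_pow, mul_div_cancel₀ _ (by positivity)]
  rw [hsplit, mul_one_sub]
  gcongr

lemma abs_Acoef_mul_pow_le (ha : 0 < a) (hab : a < b) (has : a ≤ s) (hr : 0 ≤ r)
    (hrb : r ≤ b) (hn : n ≠ 0) :
    |Acoef a b s n| * r ^ n ≤ (s / b) ^ n / (1 - (a / b) ^ 2) := by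
  have hb : 0 < b := ha.trans hab
  have hs : 0 < s := ha.trans_le has
  have hc := one_sub_div_sq_pos ha.le hab
  have hD := pow_mul_one_sub_sq_le ha.le hab hn
  have hDpos : 0 < b ^ (2 * n) - a ^ (2 * n) := (mul_pos (pow_pos hb _) hc).trans_le hD
  have hnum : |s ^ n - (a ^ 2 / s) ^ n| ≤ s ^ n := by
    refine abs_sub_le_of_nonneg_of_le (by positivity) le_rfl (by positivity) ?_
    gcongr
    rw [div_le_iff₀ hs]
    nlinarith
  calc |Acoef a b s n| * r ^ n
      ≤ s ^ n / (b ^ (2 * n) * (1 - (a / b) ^ 2)) * b ^ n := by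
        rw [Acoef, abs_div, abs_of_pos hDpos]
        exact mul_le_mul (div_le_div₀ (by positivity) hnum (by positivity) hD)
          (pow_le_pow_left₀ hr hrb n) (by positivity) (by positivity)
    _ = (s / b) ^ n / (1 - (a / b) ^ 2) := by
        generalize 1 - (a / b) ^ 2 = c at hc
        rw [div_pow, pow_mul']
        field_simp

lemma abs_Bcoef_mul_inv_pow_le (ha : 0 < a) (hab : a < b) (hs : 0 < s) (hsb : s ≤ b)
    (har : a ≤ r) (hn : n ≠ 0) :
    |Bcoef a b s n| * (r ^ n)⁻¹ ≤ (a / s) ^ n / (1 - (a / b) ^ 2) := by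
  have hb : 0 < b := ha.trans hab
  have hr : 0 < r := ha.trans_le har
  have hc := one_sub_div_sq_pos ha.le hab
  have hD := pow_mul_one_sub_sq_le ha.le hab hn
  have hDpos : 0 < b ^ (2 * n) - a ^ (2 * n) := (mul_pos (pow_pos hb _) hc).trans_le hD
  have hnum : |(b ^ 2 / s) ^ n - s ^ n| ≤ (b ^ 2 / s) ^ n := by
    refine abs_sub_le_of_nonneg_of_le (by positivity) le_rfl (by positivity) ?_
    gcongr
    rw [le_div_iff₀ hs]
    nlinarith
  calc |Bcoef a b s n| * (r ^ n)⁻¹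
      ≤ a ^ (2 * n) * (b ^ 2 / s) ^ n / (b ^ (2 * n) * (1 - (a / b) ^ 2)) * (a ^ n)⁻¹ := by
        rw [Bcoef, abs_div, abs_mul, abs_of_pos hDpos, abs_of_pos (by positivity)]
        exact mul_le_mul (div_le_div₀ (by positivity) (by gcongr) (by positivity) hD)
          (by gcongr) (by positivity) (by positivity)
    _ = (a / s) ^ n / (1 - (a / b) ^ 2) := by
        generalize 1 - (a / b) ^ 2 = c at hc
        rw [div_pow, div_pow]
        field_simp
        ring

end CoefficientBounds

def annulus (a b : ℝ) : Set ℂ := {z | a < ‖z‖ ∧ ‖z‖ < b}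

lemma isOpen_annulus (a b : ℝ) : IsOpen (annulus a b) :=
  isOpen_Ioo.preimage continuous_norm

lemma ne_zero_of_mem_annulus {a b : ℝ} (ha : 0 ≤ a) {z : ℂ} (hz : z ∈ annulus a b) :
    z ≠ 0 :=
  norm_pos_iff.1 (ha.trans_lt hz.1)

noncomputable def greenTerm (a b s α : ℝ) (m : ℕ) (z : ℂ) : ℂ :=
  ((1 / (m + 1 : ℝ) : ℝ) : ℂ) *
    ((Acoef a b s (m + 1) : ℂ) * (z ^ (m + 1) * exp (-((m + 1 : ℝ) * α) * I))
     + (Bcoef a b s (m + 1) : ℂ) * (z ^ (-(m + 1 : ℤ)) * exp (((m + 1 : ℝ) * α) * I)))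

noncomputable def greenSeries (a b s α : ℝ) (z : ℂ) : ℂ := ∑' m, greenTerm a b s α m z

noncomputable def greenRegular (a b s α : ℝ) (z : ℂ) : ℝ :=
  A0 a b s + B0 a b s * Real.log ‖z‖ - (greenSeries a b s α z).re

section GreenSeries

variable {a b s : ℝ} (α : ℝ)

lemma norm_greenTerm_le (ha : 0 < a) (hab : a < b) (has : a ≤ s) (hsb : s ≤ b) (m : ℕ)
    {z : ℂ} (haz : a ≤ ‖z‖) (hzb : ‖z‖ ≤ b) :
    ‖greenTerm a b s α m z‖ ≤
      ((s / b) ^ (m + 1) + (a / s) ^ (m + 1)) / (1 - (a / b) ^ 2) := by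
  have hinv : ‖z ^ (-(m + 1 : ℤ))‖ = (‖z‖ ^ (m + 1))⁻¹ := by
    rw [norm_zpow, ← zpow_natCast, ← zpow_neg]; push_cast; rfl
  have hweight : ‖((1 / (m + 1 : ℝ) : ℝ) : ℂ)‖ ≤ 1 := by
    rw [norm_real, Real.norm_of_nonneg (by positivity)]
    exact div_le_one_of_le₀ (by linarith [m.cast_nonneg (α := ℝ)]) (by positivity)
  calc ‖greenTerm a b s α m z‖
      ≤ |Acoef a b s (m + 1)| * ‖z‖ ^ (m + 1) +
          |Bcoef a b s (m + 1)| * (‖z‖ ^ (m + 1))⁻¹ := by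
        rw [greenTerm, norm_mul]
        refine (mul_le_of_le_one_left (norm_nonneg _) hweight).trans
          ((norm_add_le _ _).trans_eq ?_)
        simp only [norm_mul, norm_real, Real.norm_eq_abs, norm_pow, hinv, norm_exp_ofReal_mul_I,
          ← ofReal_mul, ← ofReal_neg, mul_one]
    _ ≤ (s / b) ^ (m + 1) / (1 - (a / b) ^ 2) + (a / s) ^ (m + 1) / (1 - (a / b) ^ 2) :=
        add_le_add (abs_Acoef_mul_pow_le ha hab has (norm_nonneg z) hzb m.succ_ne_zero)
          (abs_Bcoef_mul_inv_pow_le ha hab (ha.trans_le has) hsb haz m.succ_ne_zero)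
    _ = ((s / b) ^ (m + 1) + (a / s) ^ (m + 1)) / (1 - (a / b) ^ 2) := by ring

lemma summable_geometric_add_geometric (ha : 0 < a) (has : a < s) (hsb : s < b) :
    Summable fun m : ℕ => ((s / b) ^ (m + 1) + (a / s) ^ (m + 1)) / (1 - (a / b) ^ 2) := by
  have hs : 0 < s := ha.trans has
  have hb : 0 < b := hs.trans hsb
  have h₁ := summable_geometric_of_lt_one (by positivity) ((div_lt_one hb).2 hsb)
  have h₂ := summable_geometric_of_lt_one (by positivity) ((div_lt_one hs).2 has)
  exact ((summable_nat_add_iff 1).2 h₁ |>.add <| (summable_nat_add_iff 1).2 h₂).div_const _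

lemma differentiableOn_greenTerm (ha : 0 ≤ a) (m : ℕ) :
    DifferentiableOn ℂ (greenTerm a b s α m) (annulus a b) := fun _ hz =>
  (((differentiableAt_pow _).mul_const _).const_mul _ |>.add
    (((differentiableAt_zpow.2 (Or.inl (ne_zero_of_mem_annulus ha hz))).mul_const _).const_mul _)
    |>.const_mul _).differentiableWithinAt

variable (ha : 0 < a) (has : a < s) (hsb : s < b)
include ha has hsb

lemma summable_greenTerm {z : ℂ} (hz : z ∈ annulus a b) :
    Summable fun m => greenTerm a b s α m z :=
  .of_norm_bounded (summable_geometric_add_geometric ha has hsb) fun m =>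
    norm_greenTerm_le α ha (has.trans hsb) has.le hsb.le m hz.1.le hz.2.le

lemma differentiableOn_greenSeries :
    DifferentiableOn ℂ (greenSeries a b s α) (annulus a b) :=
  differentiableOn_tsum_of_summable_norm (summable_geometric_add_geometric ha has hsb)
    (differentiableOn_greenTerm α ha.le) (isOpen_annulus a b) fun m _ hz =>
      norm_greenTerm_le α ha (has.trans hsb) has.le hsb.le m hz.1.le hz.2.le

lemma harmonicOnNhd_greenRegular : HarmonicOnNhd (greenRegular a b s α) (annulus a b) := by
  intro z hz
  have hlog : HarmonicAt (fun z : ℂ => Real.log ‖z‖) z :=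
    analyticAt_id.harmonicAt_log_norm (ne_zero_of_mem_annulus ha.le hz)
  have hseries : HarmonicAt (fun z => (greenSeries a b s α z).re) z :=
    ((differentiableOn_greenSeries α ha has hsb).analyticOnNhd (isOpen_annulus a b) z
      hz).harmonicAt_re
  exact ((harmonicAt_const _).add (hlog.const_smul (c := B0 a b s))).sub hseries

lemma uReg_eventuallyEq_greenRegular_comp {p : ℝ × ℝ} (hp : zOf p ∈ annulus a b) :
    uReg a b s α =ᶠ[𝓝 p] greenRegular a b s α ∘ zOf := by
  have hopen : IsOpen (zOf ⁻¹' annulus a b) :=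
    (isOpen_annulus a b).preimage (contDiff_zOf (n := 0)).continuous
  filter_upwards [hopen.mem_nhds hp] with q hq
  rw [Function.comp_apply, uReg, greenRegular, greenSeries,
    re_tsum (summable_greenTerm α ha has hsb hq)]
  simp only [greenTerm, re_ofReal_mul, add_re]

end GreenSeries

theorem green_regular_part_harmonic_general (a b s α : ℝ) (ha : 0 < a) (hs₁ : a < s) (hs₂ : s < b) :
    ContDiffOn ℝ 2 (uReg a b s α)
      {p : ℝ × ℝ | a < ‖zOf p‖ ∧ ‖zOf p‖ < b} ∧
    ∀ p : ℝ × ℝ, a < ‖zOf p‖ → ‖zOf p‖ < b →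
      deriv (fun t : ℝ => deriv (fun w : ℝ => uReg a b s α (w, p.2)) t) p.1 +
      deriv (fun t : ℝ => deriv (fun w : ℝ => uReg a b s α (p.1, w)) t) p.2 = 0 := by
  have hharm := harmonicOnNhd_greenRegular α ha hs₁ hs₂
  refine ⟨fun p hp => ?_, fun p hp₁ hp₂ => ?_⟩
  · exact (((hharm _ hp).1.comp p contDiff_zOf.contDiffAt).congr_of_eventuallyEq
      (uReg_eventuallyEq_greenRegular_comp α ha hs₁ hs₂ hp)).contDiffWithinAt
  · exact (hharm _ ⟨hp₁, hp₂⟩).deriv_deriv_add_deriv_deriv_of_eventuallyEq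
      (uReg_eventuallyEq_greenRegular_comp α ha hs₁ hs₂ ⟨hp₁, hp₂⟩)

/-- Fix `y = (s cos α, s sin α)` in the annulus `A = {a < |x| < b}`.  The regular part
`u = G_A(·,y) + log|· - y|` of the Green function is twice continuously differentiable
on `A` and harmonic there: `∂²u/∂x₁² + ∂²u/∂x₂² = 0` at every point of `A`. -/
theorem green_regular_part_harmonic (a b s α : ℝ) (ha : 0 < a) (hab : a < b)
    (hs₁ : a < s) (hs₂ : s < b) :
    ContDiffOn ℝ 2 (uReg a b s α)
      {p : ℝ × ℝ | a < ‖zOf p‖ ∧ ‖zOf p‖ < b} ∧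
    ∀ p : ℝ × ℝ, a < ‖zOf p‖ → ‖zOf p‖ < b →
      deriv (fun t : ℝ => deriv (fun w : ℝ => uReg a b s α (w, p.2)) t) p.1 +
      deriv (fun t : ℝ => deriv (fun w : ℝ => uReg a b s α (p.1, w)) t) p.2 = 0 :=
  green_regular_part_harmonic_general a b s α ha hs₁ hs₂
end

section
/- Let 0 < a < b and define ρ : (a,b) → ℝ by ρ(r) = −(log r − log b)²/log(a/b) − log b + Σ_{m=1}^∞ (1/m)·(r^{2m} − 2a^{2m} + (ab)^{2m} r^{−2m})/(b^{2m} − a^{2m}). Then ρ is differentiable on (a,b) and for every r ∈ (a,b), (1/2)ρ'(r) = −(log(r/b)/log(a/b))·(1/r) + Σ_{m=1}^∞ (r^{2m−1} − (ab)^{2m} r^{−2m−1})/(b^{2m} − a^{2m}). -/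
/-!
The series is differentiated termwise. Writing `D_m = b^{2m+2} - a^{2m+2} ≥ b^{2m} (b² - a²)`,
on a subinterval `(a', b')` with `a < a' < b' < b` the derivatives of the summands are bounded by
`b'^{2m+1} / D_m + (ab)^{2m+2} a'^{-2m-3} / D_m`, which is dominated by geometric series of ratios
`(b'/b)²` and `(a/a')²`; the same comparison gives the convergence of the series itself.
-/

/-- The Robin function of the annulus `{a < |x| < b}` as a function of the
modulus `r` of its argument. -/
noncomputable def robinRadial (a b r : ℝ) : ℝ :=
  -(Real.log r - Real.log b) ^ 2 / Real.log (a / b) - Real.log b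
  + ∑' m : ℕ, (1 / (m + 1 : ℝ)) *
      ((r ^ (2 * (m + 1)) - 2 * a ^ (2 * (m + 1)) + (a * b) ^ (2 * (m + 1)) *
        (r ^ (2 * (m + 1)))⁻¹) / (b ^ (2 * (m + 1)) - a ^ (2 * (m + 1))))

open Real Set

noncomputable def robinTerm (a b : ℝ) (m : ℕ) (y : ℝ) : ℝ :=
  (1 / (m + 1 : ℝ)) *
      ((y ^ (2 * (m + 1)) - 2 * a ^ (2 * (m + 1)) + (a * b) ^ (2 * (m + 1)) *
        (y ^ (2 * (m + 1)))⁻¹) / (b ^ (2 * (m + 1)) - a ^ (2 * (m + 1))))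

noncomputable def robinDerivTerm (a b : ℝ) (m : ℕ) (y : ℝ) : ℝ :=
  (y ^ (2 * m + 1) - (a * b) ^ (2 * (m + 1)) * (y ^ (2 * m + 3))⁻¹) /
    (b ^ (2 * (m + 1)) - a ^ (2 * (m + 1)))

section Summability

variable {a b : ℝ}

lemma pow_mul_sub_pow_le_sub_pow (ha : 0 ≤ a) (hab : a ≤ b) (n k : ℕ) :
    b ^ n * (b ^ k - a ^ k) ≤ b ^ (n + k) - a ^ (n + k) := by
  have hn : a ^ n ≤ b ^ n := pow_le_pow_left₀ ha hab n
  rw [pow_add, pow_add]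
  nlinarith [pow_nonneg ha k]

lemma summable_div_sub_pow_of_le {f : ℕ → ℝ} {C q : ℝ} (ha : 0 ≤ a) (hab : a < b)
    (hf : ∀ m, 0 ≤ f m) (hq : 0 ≤ q) (hq1 : q < 1) (hfC : ∀ m, f m ≤ C * q ^ m * b ^ (2 * m)) :
    Summable fun m : ℕ => f m / (b ^ (2 * (m + 1)) - a ^ (2 * (m + 1))) := by
  have hb : 0 < b := ha.trans_lt hab
  have hba : 0 < b ^ 2 - a ^ 2 := sub_pos.2 (pow_lt_pow_left₀ hab ha two_ne_zero)
  have hD : ∀ m : ℕ, b ^ (2 * m) * (b ^ 2 - a ^ 2) ≤ b ^ (2 * (m + 1)) - a ^ (2 * (m + 1)) :=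
    fun m => pow_mul_sub_pow_le_sub_pow ha hab.le (2 * m) 2
  have hD₀ : ∀ m : ℕ, 0 < b ^ (2 * m) * (b ^ 2 - a ^ 2) := fun m => mul_pos (pow_pos hb _) hba
  refine Summable.of_nonneg_of_le (fun m => div_nonneg (hf m) ((hD₀ m).le.trans (hD m)))
    (fun m => ?_) ((summable_geometric_of_lt_one hq hq1).mul_left (C / (b ^ 2 - a ^ 2)))
  calc f m / (b ^ (2 * (m + 1)) - a ^ (2 * (m + 1)))
      ≤ f m / (b ^ (2 * m) * (b ^ 2 - a ^ 2)) :=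
        div_le_div_of_nonneg_left (hf m) (hD₀ m) (hD m)
    _ ≤ C * q ^ m * b ^ (2 * m) / (b ^ (2 * m) * (b ^ 2 - a ^ 2)) := by gcongr; exact hfC m
    _ = C / (b ^ 2 - a ^ 2) * q ^ m := by field_simp

lemma summable_pow_div_sub_pow (ha : 0 ≤ a) (hab : a < b) {c : ℝ} (hc : 0 ≤ c) (hcb : c < b)
    (k : ℕ) :
    Summable fun m : ℕ => c ^ (2 * m + k) / (b ^ (2 * (m + 1)) - a ^ (2 * (m + 1))) := by
  have hb : 0 < b := ha.trans_lt hab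
  refine summable_div_sub_pow_of_le ha hab (fun m => by positivity) (sq_nonneg (c / b))
    ?_ (C := c ^ k) (fun m => le_of_eq ?_)
  · rw [div_pow, div_lt_one (by positivity)]
    exact pow_lt_pow_left₀ hcb hc two_ne_zero
  · rw [← pow_mul, div_pow]
    field_simp
    ring

lemma summable_mul_inv_pow_div_sub_pow (ha : 0 ≤ a) (hab : a < b) {y : ℝ} (hay : a < y)
    (k : ℕ) :
    Summable fun m : ℕ =>
      (a * b) ^ (2 * (m + 1)) * (y ^ (2 * m + k))⁻¹ / (b ^ (2 * (m + 1)) - a ^ (2 * (m + 1))) := by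
  have hb : 0 < b := ha.trans_lt hab
  have hy : 0 < y := ha.trans_lt hay
  refine summable_div_sub_pow_of_le ha hab (fun m => by positivity) (sq_nonneg (a / y))
    ?_ (C := (a * b) ^ 2 / y ^ k) (fun m => le_of_eq ?_)
  · rw [div_pow, div_lt_one (by positivity)]
    exact pow_lt_pow_left₀ hay ha two_ne_zero
  · rw [← pow_mul, div_pow]
    field_simp
    ring

end Summability

section RobinSeries

variable {a b : ℝ}

lemma hasDerivAt_robinTerm (m : ℕ) {y : ℝ} (hy : y ≠ 0) :
    HasDerivAt (robinTerm a b m) (2 * robinDerivTerm a b m y) y := by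
  have hpow : HasDerivAt (fun y : ℝ => y ^ (2 * (m + 1)))
      ((2 * (m + 1) : ℕ) * y ^ (2 * m + 1)) y := hasDerivAt_pow _ y
  have hterm := (((hpow.sub_const (2 * a ^ (2 * (m + 1)))).add
      ((hpow.inv (pow_ne_zero _ hy)).const_mul ((a * b) ^ (2 * (m + 1))))).div_const
      (b ^ (2 * (m + 1)) - a ^ (2 * (m + 1)))).const_mul (1 / (m + 1 : ℝ))
  refine hterm.congr_deriv ?_
  rw [robinDerivTerm]
  field_simp
  push_cast
  ring

lemma norm_robinDerivTerm_le (ha : 0 ≤ a) (hab : a < b) {a' b' y : ℝ} (ha' : 0 < a')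
    (hy : y ∈ Ioo a' b') (m : ℕ) :
    ‖robinDerivTerm a b m y‖ ≤ b' ^ (2 * m + 1) / (b ^ (2 * (m + 1)) - a ^ (2 * (m + 1))) +
      (a * b) ^ (2 * (m + 1)) * (a' ^ (2 * m + 3))⁻¹ / (b ^ (2 * (m + 1)) - a ^ (2 * (m + 1))) := by
  have hb : 0 < b := ha.trans_lt hab
  have hy0 : 0 < y := ha'.trans hy.1
  have hD : 0 < b ^ (2 * (m + 1)) - a ^ (2 * (m + 1)) :=
    sub_pos.2 (pow_lt_pow_left₀ hab ha (by omega))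
  rw [← add_div, robinDerivTerm, norm_div, Real.norm_of_nonneg hD.le]
  gcongr
  calc ‖y ^ (2 * m + 1) - (a * b) ^ (2 * (m + 1)) * (y ^ (2 * m + 3))⁻¹‖
      ≤ |y ^ (2 * m + 1)| + |(a * b) ^ (2 * (m + 1)) * (y ^ (2 * m + 3))⁻¹| := abs_sub _ _
    _ = y ^ (2 * m + 1) + (a * b) ^ (2 * (m + 1)) * (y ^ (2 * m + 3))⁻¹ := by
      rw [abs_of_pos (by positivity), abs_of_nonneg (by positivity)]
    _ ≤ b' ^ (2 * m + 1) + (a * b) ^ (2 * (m + 1)) * (a' ^ (2 * m + 3))⁻¹ := by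
      gcongr
      exacts [hy.2.le, hy.1.le]

lemma summable_robinTerm (ha : 0 < a) (hab : a < b) {r : ℝ} (hr : r ∈ Ioo a b) :
    Summable fun m => robinTerm a b m r := by
  have hb : 0 < b := ha.trans hab
  have hr0 : 0 < r := ha.trans hr.1
  refine Summable.of_norm_bounded
    (((summable_pow_div_sub_pow ha.le hab hr0.le hr.2 2).add
      ((summable_pow_div_sub_pow ha.le hab ha.le hab 2).mul_left 2)).add
      (summable_mul_inv_pow_div_sub_pow ha.le hab hr.1 2)) fun m => ?_
  have hD : 0 < b ^ (2 * (m + 1)) - a ^ (2 * (m + 1)) :=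
    sub_pos.2 (pow_lt_pow_left₀ hab ha.le (by omega))
  have hm : 1 / (m + 1 : ℝ) ≤ 1 := by
    rw [div_le_one (by positivity)]
    linarith [m.cast_nonneg (α := ℝ)]
  have hN : |r ^ (2 * (m + 1)) - 2 * a ^ (2 * (m + 1)) + (a * b) ^ (2 * (m + 1)) *
        (r ^ (2 * (m + 1)))⁻¹| ≤ r ^ (2 * (m + 1)) + 2 * a ^ (2 * (m + 1)) +
        (a * b) ^ (2 * (m + 1)) * (r ^ (2 * (m + 1)))⁻¹ := by
    rw [abs_le]
    constructor <;> nlinarith [pow_pos hr0 (2 * (m + 1)), pow_pos ha (2 * (m + 1)),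
      show 0 < (a * b) ^ (2 * (m + 1)) * (r ^ (2 * (m + 1)))⁻¹ by positivity]
  calc ‖robinTerm a b m r‖
      ≤ 1 * |(r ^ (2 * (m + 1)) - 2 * a ^ (2 * (m + 1)) + (a * b) ^ (2 * (m + 1)) *
          (r ^ (2 * (m + 1)))⁻¹) / (b ^ (2 * (m + 1)) - a ^ (2 * (m + 1)))| := by
        rw [robinTerm, norm_mul, Real.norm_of_nonneg (by positivity), Real.norm_eq_abs]
        gcongr
    _ ≤ _ := by
      rw [one_mul, abs_div, abs_of_pos hD, mul_div_assoc', ← add_div, ← add_div]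
      gcongr
      exact hN

lemma hasDerivAt_tsum_robinTerm (ha : 0 < a) (hab : a < b) {r : ℝ} (hr : r ∈ Ioo a b) :
    HasDerivAt (fun y => ∑' m, robinTerm a b m y) (2 * ∑' m, robinDerivTerm a b m r) r := by
  obtain ⟨a', haa', ha'r⟩ := exists_between hr.1
  obtain ⟨b', hrb', hb'b⟩ := exists_between hr.2
  have ha' : 0 < a' := ha.trans haa'
  have hu := ((summable_pow_div_sub_pow ha.le hab (ha'.trans (ha'r.trans hrb')).le hb'b 1).add
    (summable_mul_inv_pow_div_sub_pow ha.le hab haa' 3)).mul_left 2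
  rw [← tsum_mul_left]
  refine hasDerivAt_tsum_of_isPreconnected hu isOpen_Ioo isPreconnected_Ioo
    (fun m y hy => hasDerivAt_robinTerm m (ha'.trans hy.1).ne') (fun m y hy => ?_)
    ⟨ha'r, hrb'⟩ (summable_robinTerm ha hab hr) ⟨ha'r, hrb'⟩
  rw [norm_mul, Real.norm_two]
  exact mul_le_mul_of_nonneg_left (norm_robinDerivTerm_le ha.le hab ha' hy m) zero_le_two

end RobinSeries

/-- Let `0 < a < b` and let `ρ(r)` be the radial Robin function of the annulus
`{a < |x| < b}`.  Then `ρ` is differentiable on `(a, b)` and for every `r ∈ (a, b)`,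
`(1/2)ρ'(r) = -(log(r/b)/log(a/b))·(1/r)
  + Σ_{m≥1} (r^{2m-1} - (ab)^{2m} r^{-2m-1})/(b^{2m} - a^{2m})`. -/
theorem robin_radial_derivative (a b : ℝ) (ha : 0 < a) (hab : a < b) :
    ∀ r ∈ Set.Ioo a b,
      DifferentiableAt ℝ (robinRadial a b) r ∧
      (1 / 2) * deriv (robinRadial a b) r =
        -(Real.log (r / b) / Real.log (a / b)) * (1 / r)
        + ∑' m : ℕ, (r ^ (2 * m + 1) - (a * b) ^ (2 * (m + 1)) * (r ^ (2 * m + 3))⁻¹) /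
            (b ^ (2 * (m + 1)) - a ^ (2 * (m + 1))) := by
  intro r hr
  have hr0 : 0 < r := ha.trans hr.1
  have hlog : HasDerivAt (fun y => -(log y - log b) ^ 2 / log (a / b) - log b)
      (-((2 : ℕ) * (log r - log b) ^ (2 - 1) * r⁻¹) / log (a / b)) r :=
    ((((hasDerivAt_log hr0.ne').sub_const _).pow 2).neg.div_const _).sub_const _
  have hρ : HasDerivAt (robinRadial a b) _ r := hlog.add (hasDerivAt_tsum_robinTerm ha hab hr)
  refine ⟨hρ.differentiableAt, ?_⟩
  rw [hρ.deriv, log_div hr0.ne' (hr0.trans hr.2).ne']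
  simp only [robinDerivTerm]
  push_cast
  ring
end

section
/- Let 0 < a < b and let P₁, P₂ ∈ ℝ² with a < |P₁| < b, a < |P₂| < b, P₁ ≠ P₂, and polar angles θ₁, θ₂ (so P_i = (|P_i| cos θ_i, |P_i| sin θ_i)). Suppose (|P₂|² − |P₁|²)/|P₂ − P₁|² = Σ_{m=1}^∞ ((|P₁|^{2m} − |P₂|^{2m})/(b^{2m} − a^{2m}))·[1 + (ab)^{2m}/(|P₁| |P₂|)^{2m} − (2a^{2m}/(|P₁| |P₂|)^m) cos m(θ₁ − θ₂)]. Then |P₁| = |P₂|. -/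
lemma aux_summand_nonpos (a b r₁ r₂ c : ℝ) (ha : 0 < a) (hab : a < b)
    (h1 : a < r₁) (h2 : a < r₂) (hc : |c| ≤ 1) (k : ℕ) (hk : 0 < k)
    (hle : r₁ ≤ r₂) :
    (r₁ ^ (2 * k) - r₂ ^ (2 * k)) / (b ^ (2 * k) - a ^ (2 * k)) *
      (1 + (a * b) ^ (2 * k) / (r₁ * r₂) ^ (2 * k)
        - (2 * a ^ (2 * k) / (r₁ * r₂) ^ k) * c) ≤ 0 := by
  have hr1 : 0 < r₁ := ha.trans h1
  have hr2 : 0 < r₂ := ha.trans h2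
  have hp : 0 < r₁ * r₂ := mul_pos hr1 hr2
  have hpk : 0 < (r₁ * r₂) ^ k := pow_pos hp k
  have hden : 0 < b ^ (2 * k) - a ^ (2 * k) := by
    have := pow_lt_pow_left₀ hab ha.le (by omega : 2 * k ≠ 0)
    linarith
  have hnum : r₁ ^ (2 * k) - r₂ ^ (2 * k) ≤ 0 := by
    have := pow_le_pow_left₀ hr1.le hle (2 * k)
    linarith
  have hfac1 : (r₁ ^ (2 * k) - r₂ ^ (2 * k)) / (b ^ (2 * k) - a ^ (2 * k)) ≤ 0 :=
    div_nonpos_of_nonpos_of_nonneg hnum hden.le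
  have hfac2 : 0 ≤ 1 + (a * b) ^ (2 * k) / (r₁ * r₂) ^ (2 * k)
      - (2 * a ^ (2 * k) / (r₁ * r₂) ^ k) * c := by
    set t : ℝ := (a * b) ^ k / (r₁ * r₂) ^ k with ht
    have ht0 : 0 ≤ t := div_nonneg (pow_nonneg (mul_nonneg ha.le (ha.trans hab).le) k) hpk.le
    have hsq : (a * b) ^ (2 * k) / (r₁ * r₂) ^ (2 * k) = t ^ 2 := by
      rw [ht, div_pow, ← pow_mul, ← pow_mul, Nat.mul_comm]
    have hbound : (2 * a ^ (2 * k) / (r₁ * r₂) ^ k) * c ≤ 2 * t := by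
      have habs : (2 * a ^ (2 * k) / (r₁ * r₂) ^ k) * c
          ≤ 2 * a ^ (2 * k) / (r₁ * r₂) ^ k := by
        have h0 : 0 ≤ 2 * a ^ (2 * k) / (r₁ * r₂) ^ k := by positivity
        calc (2 * a ^ (2 * k) / (r₁ * r₂) ^ k) * c
            ≤ (2 * a ^ (2 * k) / (r₁ * r₂) ^ k) * 1 := by
              apply mul_le_mul_of_nonneg_left _ h0
              exact le_trans (le_abs_self c) hc
          _ = 2 * a ^ (2 * k) / (r₁ * r₂) ^ k := mul_one _
      have h2k : a ^ (2 * k) ≤ (a * b) ^ k := by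
        have : a ^ (2 * k) = (a * a) ^ k := by rw [two_mul, pow_add, ← mul_pow]
        rw [this]
        exact pow_le_pow_left₀ (by positivity) (by nlinarith) k
      have : 2 * a ^ (2 * k) / (r₁ * r₂) ^ k ≤ 2 * t := by
        rw [ht, mul_div_assoc]
        have := div_le_div_of_nonneg_right (c := (r₁*r₂)^k) h2k hpk.le
        linarith
      linarith
    rw [hsq]
    nlinarith [sq_nonneg (1 - t)]
  exact mul_nonpos_of_nonpos_of_nonneg hfac1 hfac2

/-- Let `0 < a < b` and let `P₁, P₂` be distinct points of the annulus
`{a < |x| < b} ⊂ ℝ²` with polar angles `θ₁, θ₂`.  If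
`(|P₂|² - |P₁|²)/|P₂ - P₁|² = Σ_{m≥1} ((|P₁|^{2m} - |P₂|^{2m})/(b^{2m} - a^{2m}))·
[1 + (ab)^{2m}/(|P₁||P₂|)^{2m} - (2a^{2m}/(|P₁||P₂|)^m) cos m(θ₁ - θ₂)]`,
then `|P₁| = |P₂|`. -/
theorem equal_moduli_of_subtracted_identity (a b : ℝ) (ha : 0 < a) (hab : a < b)
    (P₁ P₂ : EuclideanSpace ℝ (Fin 2)) (θ₁ θ₂ : ℝ)
    (h₁ : a < ‖P₁‖) (h₁' : ‖P₁‖ < b) (h₂ : a < ‖P₂‖) (h₂' : ‖P₂‖ < b)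
    (hne : P₁ ≠ P₂)
    (hp₁ : P₁ = ![‖P₁‖ * Real.cos θ₁, ‖P₁‖ * Real.sin θ₁])
    (hp₂ : P₂ = ![‖P₂‖ * Real.cos θ₂, ‖P₂‖ * Real.sin θ₂])
    (heq : (‖P₂‖ ^ 2 - ‖P₁‖ ^ 2) / ‖P₂ - P₁‖ ^ 2 =
      ∑' m : ℕ, ((‖P₁‖ ^ (2 * (m + 1)) - ‖P₂‖ ^ (2 * (m + 1))) /
          (b ^ (2 * (m + 1)) - a ^ (2 * (m + 1)))) *
        (1 + (a * b) ^ (2 * (m + 1)) / (‖P₁‖ * ‖P₂‖) ^ (2 * (m + 1))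
          - (2 * a ^ (2 * (m + 1)) / (‖P₁‖ * ‖P₂‖) ^ (m + 1)) *
            Real.cos ((m + 1) * (θ₁ - θ₂)))) :
    ‖P₁‖ = ‖P₂‖ := by
  by_contra h
  have hnorm : 0 < ‖P₂ - P₁‖ := by
    rw [norm_pos_iff, sub_ne_zero]
    exact fun h' => hne h'.symm
  have hnsq : 0 < ‖P₂ - P₁‖ ^ 2 := by positivity
  rcases lt_or_gt_of_ne h with hlt | hlt
  · -- ‖P₁‖ < ‖P₂‖ : LHS > 0, RHS ≤ 0
    have hlhs : 0 < (‖P₂‖ ^ 2 - ‖P₁‖ ^ 2) / ‖P₂ - P₁‖ ^ 2 := by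
      apply div_pos _ hnsq
      nlinarith [ha.trans h₁]
    have hrhs : (∑' m : ℕ, ((‖P₁‖ ^ (2 * (m + 1)) - ‖P₂‖ ^ (2 * (m + 1))) /
          (b ^ (2 * (m + 1)) - a ^ (2 * (m + 1)))) *
        (1 + (a * b) ^ (2 * (m + 1)) / (‖P₁‖ * ‖P₂‖) ^ (2 * (m + 1))
          - (2 * a ^ (2 * (m + 1)) / (‖P₁‖ * ‖P₂‖) ^ (m + 1)) *
            Real.cos ((m + 1) * (θ₁ - θ₂)))) ≤ 0 := by
      apply tsum_nonpos
      intro m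
      exact aux_summand_nonpos a b ‖P₁‖ ‖P₂‖ _ ha hab h₁ h₂
        (Real.abs_cos_le_one _) (m + 1) (Nat.succ_pos m) hlt.le
    linarith [heq ▸ hlhs]
  · -- ‖P₂‖ < ‖P₁‖ : LHS < 0, RHS ≥ 0
    have hlhs : (‖P₂‖ ^ 2 - ‖P₁‖ ^ 2) / ‖P₂ - P₁‖ ^ 2 < 0 := by
      apply div_neg_of_neg_of_pos _ hnsq
      nlinarith [ha.trans h₂]
    have hrhs : (0:ℝ) ≤ ∑' m : ℕ, ((‖P₁‖ ^ (2 * (m + 1)) - ‖P₂‖ ^ (2 * (m + 1))) /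
          (b ^ (2 * (m + 1)) - a ^ (2 * (m + 1)))) *
        (1 + (a * b) ^ (2 * (m + 1)) / (‖P₁‖ * ‖P₂‖) ^ (2 * (m + 1))
          - (2 * a ^ (2 * (m + 1)) / (‖P₁‖ * ‖P₂‖) ^ (m + 1)) *
            Real.cos ((m + 1) * (θ₁ - θ₂))) := by
      apply tsum_nonneg
      intro m
      have := aux_summand_nonpos a b ‖P₂‖ ‖P₁‖ (Real.cos ((m + 1) * (θ₁ - θ₂)))
        ha hab h₂ h₁ (Real.abs_cos_le_one _) (m + 1) (Nat.succ_pos m) hlt.le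
      rw [mul_comm ‖P₂‖ ‖P₁‖] at this
      have hkey : (‖P₁‖ ^ (2 * (m + 1)) - ‖P₂‖ ^ (2 * (m + 1))) /
          (b ^ (2 * (m + 1)) - a ^ (2 * (m + 1))) *
        (1 + (a * b) ^ (2 * (m + 1)) / (‖P₁‖ * ‖P₂‖) ^ (2 * (m + 1))
          - (2 * a ^ (2 * (m + 1)) / (‖P₁‖ * ‖P₂‖) ^ (m + 1)) *
            Real.cos ((m + 1) * (θ₁ - θ₂)))
        = -((‖P₂‖ ^ (2 * (m + 1)) - ‖P₁‖ ^ (2 * (m + 1))) /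
          (b ^ (2 * (m + 1)) - a ^ (2 * (m + 1))) *
        (1 + (a * b) ^ (2 * (m + 1)) / (‖P₁‖ * ‖P₂‖) ^ (2 * (m + 1))
          - (2 * a ^ (2 * (m + 1)) / (‖P₁‖ * ‖P₂‖) ^ (m + 1)) *
            Real.cos ((m + 1) * (θ₁ - θ₂)))) := by ring
      rw [hkey]
      linarith
    linarith [heq ▸ hlhs]
end

section
/- Let 0 < a < b and define g : (a,b) → ℝ by g(r) = Σ_{m=1}^∞ ((−1)^m + 1)·(r^{2m} − (ab)^{2m} r^{−2m})/(b^{2m} − a^{2m}). Then the series converges for every r ∈ (a,b), g is strictly increasing on (a,b), g(r) → −∞ as r → a⁺, g(r) → +∞ as r → b⁻, and g(r) = 0 if and only if r = √(ab). -/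
/-!
The substitution `r ↦ ab / r` negates every term of the series, so `g (ab / r) = -g r`: this
gives `g (√(ab)) = 0` and reduces the behaviour at `a` to that at `b`. Each term is
nondecreasing in `r` (strictly so for `m = 2`), hence `g` is strictly increasing. The terms are
dominated by the geometric sequences `(r / b)^{2m}` and `(a / r)^{2m}`, and as `r → b` they are
eventually nonnegative with limits `(-1)^m + 1`, whose series diverges, so `g r → ∞`.
-/

open Filter

/-- The function `g(r) = Σ_{m≥1} ((-1)^m + 1)(r^{2m} - (ab)^{2m} r^{-2m})/(b^{2m} - a^{2m})`. -/
noncomputable def gFun (a b r : ℝ) : ℝ :=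
  ∑' m : ℕ, ((-1 : ℝ) ^ (m + 1) + 1) *
    (r ^ (2 * (m + 1)) - (a * b) ^ (2 * (m + 1)) * (r ^ (2 * (m + 1)))⁻¹) /
    (b ^ (2 * (m + 1)) - a ^ (2 * (m + 1)))

open Set Topology

theorem tendsto_tsum_atTop_of_tendsto_sum {α : Type*} {l : Filter α} {f : ℕ → α → ℝ}
    {g : ℕ → ℝ} (hf : ∀ m, Tendsto (f m) l (𝓝 (g m)))
    (hg : Tendsto (fun N => ∑ m ∈ Finset.range N, g m) atTop atTop)
    (hf_nonneg : ∀ᶠ x in l, ∀ m, 0 ≤ f m x) (hf_summable : ∀ᶠ x in l, Summable (f · x)) :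
    Tendsto (fun x => ∑' m, f m x) l atTop := by
  refine tendsto_atTop.2 fun M => ?_
  obtain ⟨N, hN⟩ := (hg.eventually_gt_atTop M).exists
  have hpartial : ∀ᶠ x in l, M < ∑ m ∈ Finset.range N, f m x :=
    (tendsto_finsetSum _ fun m _ => hf m).eventually_const_lt hN
  filter_upwards [hpartial, hf_nonneg, hf_summable] with x hM hx_nonneg hx_summable
  exact hM.le.trans (hx_summable.sum_le_tsum _ fun m _ => hx_nonneg m)

theorem neg_one_pow_add_one_nonneg (m : ℕ) : 0 ≤ (-1 : ℝ) ^ m + 1 := by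
  rcases neg_one_pow_eq_or ℝ m with h | h <;> simp [h]

theorem abs_neg_one_pow_add_one_le (m : ℕ) : |(-1 : ℝ) ^ m + 1| ≤ 2 := by
  rcases neg_one_pow_eq_or ℝ m with h | h <;> norm_num [h]

theorem not_summable_neg_one_pow_succ_add_one :
    ¬ Summable fun m : ℕ => (-1 : ℝ) ^ (m + 1) + 1 := by
  intro h
  have hodd := h.comp_injective (i := fun k : ℕ => 2 * k + 1) fun k l hkl => by simpa using hkl
  have hconst : (fun k : ℕ => (-1 : ℝ) ^ (2 * k + 1 + 1) + 1) = fun _ => 2 := by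
    funext k
    rw [show 2 * k + 1 + 1 = 2 * (k + 1) by ring, pow_mul]
    norm_num
  rw [Function.comp_def, hconst, summable_const_iff] at hodd
  norm_num at hodd

theorem strictMonoOn_pow_sub_mul_inv_pow {C : ℝ} (hC : 0 ≤ C) {k : ℕ} (hk : k ≠ 0) :
    StrictMonoOn (fun r : ℝ => r ^ k - C * (r ^ k)⁻¹) (Ioi 0) := by
  intro r hr s _ hrs
  have hpow : r ^ k < s ^ k := pow_lt_pow_left₀ hrs (le_of_lt hr) hk
  have hinv : C * (s ^ k)⁻¹ ≤ C * (r ^ k)⁻¹ :=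
    mul_le_mul_of_nonneg_left (inv_anti₀ (pow_pos hr k) hpow.le) hC
  simp only
  linarith

section

variable {a b : ℝ}

theorem lt_sqrt_mul_of_lt (ha : 0 < a) (hab : a < b) : a < √(a * b) :=
  (Real.lt_sqrt ha.le).2 (by nlinarith)

theorem sqrt_mul_lt_of_lt (ha : 0 ≤ a) (hab : a < b) : √(a * b) < b :=
  (Real.sqrt_lt' (ha.trans_lt hab)).2 (by nlinarith)

theorem tendsto_mul_div_nhdsGT (ha : 0 < a) (hab : a < b) :
    Tendsto (fun r => a * b / r) (𝓝[>] a) (𝓝[<] b) := by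
  refine tendsto_nhdsWithin_iff.2 ⟨?_, ?_⟩
  · have h : Tendsto (fun r => a * b / r) (𝓝 a) (𝓝 (a * b / a)) :=
      tendsto_const_nhds.div tendsto_id ha.ne'
    rw [mul_div_cancel_left₀ b ha.ne'] at h
    exact h.mono_left nhdsWithin_le_nhds
  · filter_upwards [self_mem_nhdsWithin] with r hr
    exact (div_lt_iff₀ (ha.trans hr)).2 (by nlinarith [mem_Ioi.1 hr])

end

-- The index `m` stands for the paper's `m + 1`.
noncomputable def gTerm (a b r : ℝ) (m : ℕ) : ℝ :=
  ((-1 : ℝ) ^ (m + 1) + 1) *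
    (r ^ (2 * (m + 1)) - (a * b) ^ (2 * (m + 1)) * (r ^ (2 * (m + 1)))⁻¹) /
    (b ^ (2 * (m + 1)) - a ^ (2 * (m + 1)))

theorem gFun_eq_tsum_gTerm (a b r : ℝ) : gFun a b r = ∑' m, gTerm a b r m := rfl

namespace gTerm

variable {a b : ℝ}

theorem denom_pos (ha : 0 ≤ a) (hab : a < b) (m : ℕ) :
    0 < b ^ (2 * (m + 1)) - a ^ (2 * (m + 1)) :=
  sub_pos.2 (pow_lt_pow_left₀ hab ha (by omega))

theorem eq_div (hb : b ≠ 0) {r : ℝ} (hr : r ≠ 0) (m : ℕ) :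
    gTerm a b r m = ((-1 : ℝ) ^ (m + 1) + 1) *
      (((r / b) ^ 2) ^ (m + 1) - ((a / r) ^ 2) ^ (m + 1)) / (1 - ((a / b) ^ 2) ^ (m + 1)) := by
  simp only [gTerm, div_pow, ← pow_mul, mul_pow]
  field_simp

theorem mul_div_eq_neg (hab : a * b ≠ 0) (r : ℝ) (m : ℕ) :
    gTerm a b (a * b / r) m = -gTerm a b r m := by
  rcases eq_or_ne r 0 with rfl | hr
  · simp [gTerm]
  · simp only [gTerm, div_pow]
    field_simp
    ring

theorem sqrt_mul_eq_zero (ha : 0 < a) (hab : a < b) (m : ℕ) : gTerm a b √(a * b) m = 0 := by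
  have h := mul_div_eq_neg (mul_pos ha (ha.trans hab)).ne' √(a * b) m
  rw [Real.div_sqrt] at h
  linarith

theorem self_right (ha : 0 ≤ a) (hab : a < b) (m : ℕ) :
    gTerm a b b m = (-1 : ℝ) ^ (m + 1) + 1 := by
  have hb : b ^ (2 * (m + 1)) ≠ 0 := pow_ne_zero _ (ha.trans_lt hab).ne'
  rw [gTerm, mul_pow]
  field_simp [(denom_pos ha hab m).ne']

theorem monotoneOn (ha : 0 ≤ a) (hab : a < b) (m : ℕ) :
    MonotoneOn (gTerm a b · m) (Ioi 0) := fun r hr s hs hrs =>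
  div_le_div_of_nonneg_right
    (mul_le_mul_of_nonneg_left
      ((strictMonoOn_pow_sub_mul_inv_pow ((even_two_mul _).pow_nonneg _) (by omega)).monotoneOn
        hr hs hrs)
      (neg_one_pow_add_one_nonneg _))
    (denom_pos ha hab m).le

theorem strictMonoOn_one (ha : 0 ≤ a) (hab : a < b) :
    StrictMonoOn (gTerm a b · 1) (Ioi 0) := fun r hr s hs hrs =>
  div_lt_div_of_pos_right
    (mul_lt_mul_of_pos_left
      (strictMonoOn_pow_sub_mul_inv_pow ((even_two_mul _).pow_nonneg _) (by omega) hr hs hrs)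
      (by norm_num))
    (denom_pos ha hab 1)

theorem nonneg_of_sqrt_mul_le (ha : 0 < a) (hab : a < b) {r : ℝ} (hr : √(a * b) ≤ r) (m : ℕ) :
    0 ≤ gTerm a b r m := by
  have hsqrt : 0 < √(a * b) := ha.trans (lt_sqrt_mul_of_lt ha hab)
  simpa [sqrt_mul_eq_zero ha hab] using
    monotoneOn ha.le hab m (mem_Ioi.2 hsqrt) (mem_Ioi.2 (hsqrt.trans_le hr)) hr

theorem summable (ha : 0 < a) {r : ℝ} (hr : r ∈ Ioo a b) : Summable (gTerm a b r) := by
  have hr0 : 0 < r := ha.trans hr.1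
  have hb0 : 0 < b := hr0.trans hr.2
  have hx : (r / b) ^ 2 < 1 := pow_lt_one₀ (by positivity) ((div_lt_one hb0).2 hr.2) two_ne_zero
  have hy : (a / r) ^ 2 < 1 := pow_lt_one₀ (by positivity) ((div_lt_one hr0).2 hr.1) two_ne_zero
  have hq : (a / b) ^ 2 < 1 :=
    pow_lt_one₀ (by positivity) ((div_lt_one hb0).2 (hr.1.trans hr.2)) two_ne_zero
  set x := (r / b) ^ 2
  set y := (a / r) ^ 2
  set q := (a / b) ^ 2
  have hgeom : Summable fun m : ℕ => x ^ (m + 1) + y ^ (m + 1) :=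
    ((summable_nat_add_iff 1).2 (summable_geometric_of_lt_one (by positivity) hx)).add
      ((summable_nat_add_iff 1).2 (summable_geometric_of_lt_one (by positivity) hy))
  refine (hgeom.mul_left (2 / (1 - q))).of_norm_bounded fun m => ?_
  have hqm : q ^ (m + 1) ≤ q := pow_le_of_le_one (by positivity) hq.le (by omega)
  have hdiff : |x ^ (m + 1) - y ^ (m + 1)| ≤ x ^ (m + 1) + y ^ (m + 1) :=
    abs_le.2 ⟨by linarith [pow_nonneg (sq_nonneg (r / b)) (m + 1)],
      by linarith [pow_nonneg (sq_nonneg (a / r)) (m + 1)]⟩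
  rw [Real.norm_eq_abs, eq_div hb0.ne' hr0.ne', abs_div, abs_mul,
    abs_of_pos (sub_pos.2 (hqm.trans_lt hq)), div_mul_eq_mul_div]
  exact div_le_div₀ (by positivity)
    (mul_le_mul (abs_neg_one_pow_add_one_le _) hdiff (abs_nonneg _) zero_le_two)
    (sub_pos.2 hq) (by linarith)

theorem continuousAt {x : ℝ} (hx : x ≠ 0) (m : ℕ) : ContinuousAt (gTerm a b · m) x := by
  unfold gTerm
  fun_prop (disch := exact pow_ne_zero _ hx)

end gTerm

section

variable {a b : ℝ}

theorem gFun_mul_div_eq_neg (hab : a * b ≠ 0) (r : ℝ) : gFun a b (a * b / r) = -gFun a b r := by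
  simp only [gFun_eq_tsum_gTerm, gTerm.mul_div_eq_neg hab, tsum_neg]

theorem gFun_sqrt_mul_eq_zero (ha : 0 < a) (hab : a < b) : gFun a b √(a * b) = 0 := by
  simp [gFun_eq_tsum_gTerm, gTerm.sqrt_mul_eq_zero ha hab]

theorem gFun_strictMonoOn (ha : 0 < a) (hab : a < b) : StrictMonoOn (gFun a b) (Ioo a b) :=
  fun _ hr _ hs hrs =>
  (gTerm.summable ha hr).tsum_lt_tsum
    (fun m => gTerm.monotoneOn ha.le hab m (ha.trans hr.1) (ha.trans hs.1) hrs.le)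
    (gTerm.strictMonoOn_one ha.le hab (ha.trans hr.1) (ha.trans hs.1) hrs)
    (gTerm.summable ha hs)

theorem tendsto_gFun_nhdsLT (ha : 0 < a) (hab : a < b) : Tendsto (gFun a b) (𝓝[<] b) atTop := by
  have hnear : Ioo √(a * b) b ∈ 𝓝[<] b := Ioo_mem_nhdsLT (sqrt_mul_lt_of_lt ha.le hab)
  refine tendsto_tsum_atTop_of_tendsto_sum
    (fun m => (gTerm.continuousAt (ha.trans hab).ne' m).tendsto.mono_left nhdsWithin_le_nhds) ?_
    (mem_of_superset hnear fun r hr m => gTerm.nonneg_of_sqrt_mul_le ha hab hr.1.le m)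
    (mem_of_superset hnear fun r hr =>
      gTerm.summable ha ⟨(lt_sqrt_mul_of_lt ha hab).trans hr.1, hr.2⟩)
  simp only [gTerm.self_right ha.le hab]
  exact (not_summable_iff_tendsto_nat_atTop_of_nonneg fun m => neg_one_pow_add_one_nonneg _).1
    not_summable_neg_one_pow_succ_add_one

theorem tendsto_gFun_nhdsGT (ha : 0 < a) (hab : a < b) : Tendsto (gFun a b) (𝓝[>] a) atBot := by
  have hsymm : (fun r => -gFun a b (a * b / r)) = gFun a b := funext fun r => by
    rw [gFun_mul_div_eq_neg (mul_pos ha (ha.trans hab)).ne', neg_neg]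
  rw [← hsymm]
  exact tendsto_neg_atTop_atBot.comp
    ((tendsto_gFun_nhdsLT ha hab).comp (tendsto_mul_div_nhdsGT ha hab))

end

/-- Let `0 < a < b`.  The series defining
`g(r) = Σ_{m≥1} ((-1)^m + 1)(r^{2m} - (ab)^{2m} r^{-2m})/(b^{2m} - a^{2m})` converges for
every `r ∈ (a, b)`; `g` is strictly increasing on `(a, b)`, `g(r) → -∞` as `r → a⁺`,
`g(r) → +∞` as `r → b⁻`, and `g(r) = 0` if and only if `r = √(ab)`. -/
theorem gFun_properties (a b : ℝ) (ha : 0 < a) (hab : a < b) :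
    (∀ r ∈ Set.Ioo a b, Summable (fun m : ℕ => ((-1 : ℝ) ^ (m + 1) + 1) *
      (r ^ (2 * (m + 1)) - (a * b) ^ (2 * (m + 1)) * (r ^ (2 * (m + 1)))⁻¹) /
      (b ^ (2 * (m + 1)) - a ^ (2 * (m + 1))))) ∧
    StrictMonoOn (gFun a b) (Set.Ioo a b) ∧
    Tendsto (gFun a b) (nhdsWithin a (Set.Ioi a)) atBot ∧
    Tendsto (gFun a b) (nhdsWithin b (Set.Iio b)) atTop ∧
    ∀ r ∈ Set.Ioo a b, (gFun a b r = 0 ↔ r = Real.sqrt (a * b)) := by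
  have hmono := gFun_strictMonoOn ha hab
  have hsqrt : √(a * b) ∈ Ioo a b := ⟨lt_sqrt_mul_of_lt ha hab, sqrt_mul_lt_of_lt ha.le hab⟩
  refine ⟨fun r hr => gTerm.summable ha hr, hmono, tendsto_gFun_nhdsGT ha hab,
    tendsto_gFun_nhdsLT ha hab, fun r hr => ?_⟩
  rw [← gFun_sqrt_mul_eq_zero ha hab]
  exact hmono.injOn.eq_iff hr hsqrt
end
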